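/- arXiv:1010.1866 — 2 statements merged into one kernel-verified Lean document; each statement's English description precedes it below -/
import Mathlib

section
/- For any unrooted binary tree T with n leaves (n sufficiently large), there exist two internal nodes u, v and indices i, j such that the subtrees t_i(T,u) and t_j(T,v) are vertex-disjoint and each contains at least n/6 and at most n/3 leaves. -/
open SimpleGraph

/-- Degree via neighbor set cardinality (avoids decidability assumptions). -/
noncomputable def pdeg {V : Type} (g : SimpleGraph V) (v : V) : ℕ :=
  (g.neighborSet v).ncard

/-- `g` is a phylogeny on leaf type `L` with internal-node type `I`:
an unrooted binary tree whose leaves are exactly the `L`-vertices. -/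
def IsPhylo {L I : Type} (g : SimpleGraph (L ⊕ I)) : Prop :=
  g.Connected ∧ g.IsAcyclic ∧ (∀ l : L, pdeg g (Sum.inl l) = 1) ∧
    (∀ i : I, pdeg g (Sum.inr i) = 3)

/-- The side of the split determined by the edge `{u,v}` that contains `u`:
the set of taxa reachable from `u` after deleting that edge. -/
def splitOf {L I : Type} (g : SimpleGraph (L ⊕ I)) (u v : L ⊕ I) : Set L :=
  {x : L | (g.deleteEdges {s(u, v)}).Reachable (Sum.inl x) u}

/-- The set of (leaf-)splits of `g`, one for each oriented edge. -/
def splits {L I : Type} (g : SimpleGraph (L ⊕ I)) : Set (Set L) :=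
  {S | ∃ u v, g.Adj u v ∧ S = splitOf g u v}

/-- `quartetSplit g a b c d` means `g` induces the quartet topology `ab|cd`:
the path from `a` to `b` is vertex-disjoint from the path from `c` to `d`. -/
def quartetSplit {L I : Type} (g : SimpleGraph (L ⊕ I)) (a b c d : L) : Prop :=
  ∃ (p : g.Path (Sum.inl a) (Sum.inl b)) (q : g.Path (Sum.inl c) (Sum.inl d)),
    ∀ x ∈ p.1.support, x ∉ q.1.support

/-- The quartet distance between two phylogenies on the same taxa:
the number of 4-element subsets of taxa on which the induced quartet
topologies differ. -/
noncomputable def dQ {L I : Type} [Fintype L] [DecidableEq L] (g g' : SimpleGraph (L ⊕ I)) : ℕ :=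
  Set.ncard {s : Finset L | s.card = 4 ∧ ∃ a b c d : L, s = ({a, b, c, d} : Finset L) ∧
    quartetSplit g a b c d ∧ ¬ quartetSplit g' a b c d}

/-- The vertex set of the subtree `t_i(T,u)` obtained by removing vertex `u`,
namely the connected component of `g - u` containing the neighbour `w` of `u`. -/
def compOf {L I : Type} (g : SimpleGraph (L ⊕ I)) (u w : L ⊕ I) : Set (L ⊕ I) :=
  {x | ∃ (hx : x ≠ u) (hw : w ≠ u),
    (g.induce {v | v ≠ u}).Reachable ⟨x, hx⟩ ⟨w, hw⟩}

/-! Weigh an oriented edge `(u, w)` of the tree by the number of leaves of the branch at `u`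
through `w`. Opposite orientations of an edge have weights summing to `n`, and at an internal
node `w` entered from `u` the two further branches split the weight of `(u, w)`. So from any
oriented edge of weight at least `n/6`, repeatedly stepping into the heavier further branch keeps
the weight above `n/6` while it is above `n/3`, and lowers it strictly; the walk ends at a
balanced branch inside the one we started from. Starting at a leaf gives a first balanced branch
`A`; the opposite side of its edge has at least `2n/3` leaves, and descending inside it gives a
second balanced branch, disjoint from `A`. -/

theorem SimpleGraph.IsAcyclic.mem_edges_of_adj {V : Type*} {G : SimpleGraph V}
    (hG : G.IsAcyclic) {u w : V} (h : G.Adj u w) (p : G.Walk u w) : s(u, w) ∈ p.edges :=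
  isBridge_iff_forall_walk_mem_edges.mp (isAcyclic_iff_forall_adj_isBridge.mp hG h) p

theorem SimpleGraph.IsAcyclic.mem_support_of_adj_of_adj {V : Type*} {G : SimpleGraph V}
    (hG : G.IsAcyclic) {u w w' : V} (hw : G.Adj u w) (hw' : G.Adj u w') (hne : w ≠ w')
    (p : G.Walk w' w) : u ∈ p.support := by
  have := hG.mem_edges_of_adj hw (p.cons hw')
  rw [Walk.edges_cons, List.mem_cons, Sym2.eq_iff] at this
  rcases this with (⟨-, h⟩ | ⟨-, h⟩) | h
  · exact absurd h hne
  · exact absurd h.symm hw.ne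
  · exact p.fst_mem_support_of_mem_edges h

theorem Set.exists_eq_insert_pair_of_ncard_eq_three {α : Type*} {s : Set α} (hs : s.ncard = 3)
    {u : α} (hu : u ∈ s) : ∃ a b, a ≠ u ∧ b ≠ u ∧ a ≠ b ∧ s = {u, a, b} := by
  obtain ⟨a, b, hab, hs'⟩ := Set.ncard_eq_two.mp <|
    (Set.ncard_sdiff_singleton_of_mem hu).trans (by rw [hs])
  have ha : a ∈ s \ {u} := hs' ▸ by simp
  have hb : b ∈ s \ {u} := hs' ▸ by simp
  refine ⟨a, b, ha.2, hb.2, hab, ?_⟩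
  rw [← hs', Set.insert_sdiff_singleton, Set.insert_eq_of_mem hu]

section compOf

variable {L I : Type} {g : SimpleGraph (L ⊕ I)}

theorem mem_compOf_iff {u w x : L ⊕ I} :
    x ∈ compOf g u w ↔ x ≠ u ∧ w ≠ u ∧ ∃ p : g.Walk x w, u ∉ p.support := by
  classical
  constructor
  · rintro ⟨hx, hw, ⟨p⟩⟩
    refine ⟨hx, hw, p.map (Embedding.induce {v | v ≠ u}).toHom, fun hu => ?_⟩
    replace hu : u ∈ p.support.map (Embedding.induce (G := g) {v | v ≠ u}).toHom := by
      rwa [← Walk.support_map]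
    obtain ⟨⟨y, hy⟩, -, hyu⟩ := List.mem_map.mp hu
    exact hy hyu
  · rintro ⟨hx, hw, p, hp⟩
    exact ⟨hx, hw, ⟨p.induce {v | v ≠ u} fun y hy e => hp (e ▸ hy)⟩⟩

theorem self_mem_compOf {u w : L ⊕ I} (h : g.Adj u w) : w ∈ compOf g u w :=
  mem_compOf_iff.mpr ⟨h.ne', h.ne', Walk.nil, by simp [h.ne]⟩

theorem compOf_subset_compl {u w : L ⊕ I} : compOf g u w ⊆ {u}ᶜ :=
  fun _ hx => (mem_compOf_iff.mp hx).1

theorem exists_adj_mem_compOf (hc : g.Connected) {u x : L ⊕ I} (hx : x ≠ u) :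
    ∃ w, g.Adj u w ∧ x ∈ compOf g u w := by
  obtain ⟨q, hq⟩ := hc.exists_isPath u x
  cases q with
  | nil => exact absurd rfl hx
  | cons h r =>
    rw [Walk.cons_isPath_iff] at hq
    exact ⟨_, h, mem_compOf_iff.mpr ⟨hx, h.ne', r.reverse, by simpa using hq.2⟩⟩

theorem compOf_eq_singleton {u w : L ⊕ I} (h : g.neighborSet w = {u}) :
    compOf g u w = {w} := by
  have huw : g.Adj u w := (show u ∈ g.neighborSet w by simp [h]).symm
  refine Set.eq_singleton_iff_unique_mem.mpr ⟨self_mem_compOf huw, fun x hx => ?_⟩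
  obtain ⟨-, -, p, hp⟩ := mem_compOf_iff.mp hx
  by_contra hxw
  have hlast : p.penultimate ∈ g.neighborSet w :=
    (p.adj_penultimate (Walk.not_nil_of_ne hxw)).symm
  rw [h, Set.mem_singleton_iff] at hlast
  exact hp (hlast ▸ p.getVert_mem_support _)

theorem compOf_disjoint_of_ne (ha : g.IsAcyclic) {u w w' : L ⊕ I} (hw : g.Adj u w)
    (hw' : g.Adj u w') (hne : w ≠ w') : Disjoint (compOf g u w) (compOf g u w') := by
  refine Set.disjoint_left.mpr fun x hx hx' => ?_
  obtain ⟨-, -, p, hp⟩ := mem_compOf_iff.mp hx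
  obtain ⟨-, -, p', hp'⟩ := mem_compOf_iff.mp hx'
  have := ha.mem_support_of_adj_of_adj hw hw' hne (p'.reverse.append p)
  rw [Walk.mem_support_append_iff, Walk.support_reverse, List.mem_reverse] at this
  tauto

theorem compOf_subset_compOf (ha : g.IsAcyclic) {u w a : L ⊕ I} (hw : g.Adj u w)
    (hwa : g.Adj w a) (hau : a ≠ u) : compOf g w a ⊆ compOf g u w := by
  classical
  intro x hx
  obtain ⟨-, -, p, hp⟩ := mem_compOf_iff.mp hx
  have hup : u ∉ p.support := fun hu => by
    have := ha.mem_support_of_adj_of_adj hw.symm hwa hau.symm (p.dropUntil u hu).reverse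
    rw [Walk.support_reverse, List.mem_reverse] at this
    exact hp (p.support_dropUntil_subset_support hu this)
  refine mem_compOf_iff.mpr
    ⟨fun e => hup (e ▸ p.start_mem_support), hw.ne', p.concat hwa.symm, ?_⟩
  simpa [Walk.support_concat, hup] using hw.ne

theorem compOf_disjoint_compOf_swap (ha : g.IsAcyclic) {u w : L ⊕ I} (h : g.Adj u w) :
    Disjoint (compOf g u w) (compOf g w u) := by
  refine Set.disjoint_left.mpr fun x hx hx' => ?_
  obtain ⟨-, -, p, hp⟩ := mem_compOf_iff.mp hx
  obtain ⟨-, -, q, hq⟩ := mem_compOf_iff.mp hx'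
  have := ha.mem_edges_of_adj h (q.reverse.append p)
  rw [Walk.edges_append, List.mem_append, Walk.edges_reverse, List.mem_reverse] at this
  rcases this with he | he
  · exact hq (q.snd_mem_support_of_mem_edges he)
  · exact hp (p.fst_mem_support_of_mem_edges he)

theorem compOf_union_compOf_swap (hc : g.Connected) (ha : g.IsAcyclic) {u w : L ⊕ I}
    (h : g.Adj u w) : compOf g u w ∪ compOf g w u = Set.univ := by
  refine Set.eq_univ_of_forall fun x => ?_
  rcases eq_or_ne x u with rfl | hxu
  · exact Or.inr (self_mem_compOf h.symm)
  obtain ⟨a, hua, hxa⟩ := exists_adj_mem_compOf hc hxu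
  rcases eq_or_ne a w with rfl | haw
  · exact Or.inl hxa
  · exact Or.inr (compOf_subset_compOf ha h.symm hua haw hxa)

theorem compOf_union_compOf_union_compOf (hc : g.Connected) {v a b c : L ⊕ I}
    (hv : g.neighborSet v = {a, b, c}) :
    compOf g v a ∪ compOf g v b ∪ compOf g v c = {v}ᶜ := by
  refine subset_antisymm
    (Set.union_subset (Set.union_subset compOf_subset_compl compOf_subset_compl)
      compOf_subset_compl) fun x hx => ?_
  obtain ⟨w, hvw, hxw⟩ := exists_adj_mem_compOf hc hx
  have hw : w ∈ ({a, b, c} : Set (L ⊕ I)) := hv ▸ hvw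
  rcases hw with rfl | rfl | rfl
  · exact Or.inl (Or.inl hxw)
  · exact Or.inl (Or.inr hxw)
  · exact Or.inr hxw

end compOf

noncomputable def leafCount {L I : Type} (g : SimpleGraph (L ⊕ I)) (u w : L ⊕ I) : ℕ :=
  (Sum.inl ⁻¹' compOf g u w).ncard

section leafCount

variable {L I : Type} [Fintype L] {g : SimpleGraph (L ⊕ I)}

theorem leafCount_add_leafCount_swap (hc : g.Connected) (ha : g.IsAcyclic) {u w : L ⊕ I}
    (h : g.Adj u w) : leafCount g u w + leafCount g w u = Fintype.card L := by
  have hcover : Sum.inl ⁻¹' compOf g u w ∪ Sum.inl ⁻¹' compOf g w u = Set.univ := by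
    rw [← Set.preimage_union, compOf_union_compOf_swap hc ha h, Set.preimage_univ]
  rw [leafCount, leafCount, ← Set.ncard_union_eq ((compOf_disjoint_compOf_swap ha h).preimage _),
    hcover, Set.ncard_univ, Nat.card_eq_fintype_card]

theorem leafCount_add_leafCount_add_leafCount (hc : g.Connected) (ha : g.IsAcyclic) {k : I}
    {a b c : L ⊕ I} (hk : g.neighborSet (Sum.inr k) = {a, b, c}) (hab : a ≠ b) (hac : a ≠ c)
    (hbc : b ≠ c) :
    leafCount g (Sum.inr k) a + leafCount g (Sum.inr k) b + leafCount g (Sum.inr k) c =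
      Fintype.card L := by
  have hadj : ∀ x ∈ ({a, b, c} : Set (L ⊕ I)), g.Adj (Sum.inr k) x :=
    fun x hx => show x ∈ g.neighborSet _ from hk ▸ hx
  have hdisj {x y : L ⊕ I} (hx : x ∈ ({a, b, c} : Set (L ⊕ I)))
      (hy : y ∈ ({a, b, c} : Set (L ⊕ I))) (hxy : x ≠ y) :
      Disjoint (Sum.inl ⁻¹' compOf g (Sum.inr k) x : Set L)
        (Sum.inl ⁻¹' compOf g (Sum.inr k) y) :=
    (compOf_disjoint_of_ne ha (hadj x hx) (hadj y hy) hxy).preimage _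
  have hcover : Sum.inl ⁻¹' compOf g (Sum.inr k) a ∪ Sum.inl ⁻¹' compOf g (Sum.inr k) b ∪
      Sum.inl ⁻¹' compOf g (Sum.inr k) c = Set.univ := by
    rw [← Set.preimage_union, ← Set.preimage_union, compOf_union_compOf_union_compOf hc hk]
    exact Set.eq_univ_of_forall fun x => Sum.inl_ne_inr
  rw [leafCount, leafCount, leafCount, ← Set.ncard_union_eq (hdisj (by simp) (by simp) hab),
    ← Set.ncard_union_eq (Set.disjoint_union_left.mpr
      ⟨hdisj (by simp) (by simp) hac, hdisj (by simp) (by simp) hbc⟩),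
    hcover, Set.ncard_univ, Nat.card_eq_fintype_card]

end leafCount

section IsPhylo

variable {L I : Type} {g : SimpleGraph (L ⊕ I)}

theorem IsPhylo.neighborSet_inl (hg : IsPhylo g) {l : L} {u : L ⊕ I} (h : g.Adj (Sum.inl l) u) :
    g.neighborSet (Sum.inl l) = {u} := by
  obtain ⟨a, ha⟩ := Set.ncard_eq_one.mp (hg.2.2.1 l)
  rwa [(show u ∈ ({a} : Set (L ⊕ I)) from ha ▸ h)]

theorem IsPhylo.leafCount_inl (hg : IsPhylo g) {l : L} {u : L ⊕ I} (h : g.Adj u (Sum.inl l)) :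
    leafCount g u (Sum.inl l) = 1 := by
  rw [leafCount, compOf_eq_singleton (hg.neighborSet_inl h.symm)]
  exact Set.ncard_eq_one.mpr ⟨l, by ext; simp⟩

theorem IsPhylo.leafCount_inl_swap [Fintype L] (hg : IsPhylo g) {l : L} {u : L ⊕ I}
    (h : g.Adj u (Sum.inl l)) : leafCount g (Sum.inl l) u + 1 = Fintype.card L := by
  rw [← hg.leafCount_inl h, add_comm, leafCount_add_leafCount_swap hg.1 hg.2.1 h]

end IsPhylo

theorem IsPhylo.exists_balanced_compOf_subset {L I : Type} [Fintype L] [Fintype I]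
    {g : SimpleGraph (L ⊕ I)} (hg : IsPhylo g) (hn : 3 ≤ Fintype.card L) {u w : L ⊕ I}
    (h : g.Adj u w) (hlarge : Fintype.card L ≤ 6 * leafCount g u w) :
    ∃ (i : I) (w' : L ⊕ I), g.Adj (Sum.inr i) w' ∧
      compOf g (Sum.inr i) w' ⊆ compOf g u w ∧
      Fintype.card L ≤ 6 * leafCount g (Sum.inr i) w' ∧
      3 * leafCount g (Sum.inr i) w' ≤ Fintype.card L := by
  obtain ⟨hc, ha, -, hdeg⟩ := id hg
  induction hm : (compOf g u w).ncard using Nat.strong_induction_on generalizing u w with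
  | _ m ih =>
    by_cases hsmall : 3 * leafCount g u w ≤ Fintype.card L
    · rcases u with l | i
      · have := hg.leafCount_inl_swap h.symm
        omega
      · exact ⟨i, w, h, subset_rfl, hlarge, hsmall⟩
    rcases w with l | k
    · have := hg.leafCount_inl h
      omega
    obtain ⟨a, b, hau, hbu, hab, hk⟩ :=
      Set.exists_eq_insert_pair_of_ncard_eq_three (hdeg k) h.symm
    have hsplit : leafCount g (Sum.inr k) a + leafCount g (Sum.inr k) b =
        leafCount g u (Sum.inr k) := by
      have := leafCount_add_leafCount_add_leafCount hc ha hk hau.symm hbu.symm hab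
      have := leafCount_add_leafCount_swap hc ha h
      omega
    obtain ⟨c, hkc, hcu, hheavy⟩ : ∃ c, g.Adj (Sum.inr k) c ∧ c ≠ u ∧
        leafCount g u (Sum.inr k) ≤ 2 * leafCount g (Sum.inr k) c := by
      have hka : g.Adj (Sum.inr k) a := show a ∈ g.neighborSet _ from hk ▸ by simp
      have hkb : g.Adj (Sum.inr k) b := show b ∈ g.neighborSet _ from hk ▸ by simp
      rcases le_total (leafCount g (Sum.inr k) a) (leafCount g (Sum.inr k) b) with hle | hle
      · exact ⟨b, hkb, hbu, by omega⟩
      · exact ⟨a, hka, hau, by omega⟩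
    have hsub := compOf_subset_compOf ha h hkc hcu
    have hlt : (compOf g (Sum.inr k) c).ncard < m := hm ▸ Set.ncard_lt_ncard
      ((Set.ssubset_iff_of_subset hsub).mpr
        ⟨Sum.inr k, self_mem_compOf h, fun hmem => compOf_subset_compl hmem rfl⟩)
    obtain ⟨i, w', hiw', hsub', hbalanced⟩ := ih _ hlt hkc (by omega) rfl
    exact ⟨i, w', hiw', hsub'.trans hsub, hbalanced⟩

/-- For any unrooted binary tree with sufficiently many
leaves there are two vertex-disjoint subtrees of the form `t_i(T,u)`,
`t_j(T,v)` each containing at least `n/6` and at most `n/3` leaves. -/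
theorem exists_two_disjoint_balanced_subtrees :
    ∃ N : ℕ, ∀ (L I : Type) (_ : Fintype L) (_ : Fintype I)
      (g : SimpleGraph (L ⊕ I)), IsPhylo g → N ≤ Fintype.card L →
      ∃ (u v : I) (w w' : L ⊕ I), g.Adj (Sum.inr u) w ∧ g.Adj (Sum.inr v) w' ∧
        Disjoint (compOf g (Sum.inr u) w) (compOf g (Sum.inr v) w') ∧
        Fintype.card L ≤ 6 * Set.ncard {x : L | Sum.inl x ∈ compOf g (Sum.inr u) w} ∧
        3 * Set.ncard {x : L | Sum.inl x ∈ compOf g (Sum.inr u) w} ≤ Fintype.card L ∧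
        Fintype.card L ≤ 6 * Set.ncard {x : L | Sum.inl x ∈ compOf g (Sum.inr v) w'} ∧
        3 * Set.ncard {x : L | Sum.inl x ∈ compOf g (Sum.inr v) w'} ≤ Fintype.card L := by
  refine ⟨3, fun L I _ _ g hg hn => ?_⟩
  obtain ⟨l⟩ : Nonempty L := Fintype.card_pos_iff.mp (by omega)
  obtain ⟨v, hv⟩ := Set.ncard_eq_one.mp (hg.2.2.1 l)
  have hlv : g.Adj (Sum.inl l) v := show v ∈ g.neighborSet _ from hv ▸ rfl
  obtain ⟨u, w, huw, -, hlo, hhi⟩ := hg.exists_balanced_compOf_subset hn hlv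
    (by have := hg.leafCount_inl_swap hlv.symm; omega)
  obtain ⟨u', w', huw', hsub, hlo', hhi'⟩ := hg.exists_balanced_compOf_subset hn huw.symm
    (by have := leafCount_add_leafCount_swap hg.1 hg.2.1 huw; omega)
  exact ⟨u, u', w, w', huw, huw', (compOf_disjoint_compOf_swap hg.2.1 huw).mono_right hsub,
    hlo, hhi, hlo', hhi'⟩
end

section
/- If T and T' are two distinct unrooted binary trees on the same set of n ≥ 4 leaves, then the quartet distance d_Q(T,T') is at least n − 3. -/
open SimpleGraph

/-!
Let `S₀` be a smallest split that lies in exactly one of the two trees, say in `g`. Singletons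
are splits of every phylogeny, so `S₀` ends at an internal vertex and splits there as `A ⊔ B`
into two smaller splits of `g`, which by minimality are splits of `g'` as well. In `g'` the
subtrees `A` and `B` are not siblings, since `A ∪ B = S₀` is not a split of `g'`; hence some
split of `g'` contains `A`, avoids `B` and cuts `(A ∪ B)ᶜ` into nonempty parts `C` and `D`.
Now `g` displays `ab|cd` and `g'` displays `ac|bd` for every choice of `a ∈ A`, `b ∈ B`,
`c ∈ C`, `d ∈ D`, so `d_Q(g, g') ≥ |A| |B| |C| |D| ≥ |A| + |B| + |C| + |D| - 3 = n - 3`.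
-/

open scoped symmDiff

namespace SimpleGraph

variable {V : Type} {g : SimpleGraph V} {u v w x y z : V}

def side (g : SimpleGraph V) (u v : V) : Set V :=
  {z | (g.deleteEdges {s(u, v)}).Reachable z u}

lemma mem_side_self : u ∈ side g u v := Reachable.refl _

lemma mem_side_of_mem_support {W : (g.deleteEdges {s(u, v)}).Walk x y}
    (hy : y ∈ side g u v) (hz : z ∈ W.support) : z ∈ side g u v := by
  classical
  exact (W.dropUntil z hz).reachable.trans hy

lemma mem_side_of_adj (h : g.Adj x y) (hne : s(x, y) ≠ s(u, v)) (hx : x ∈ side g u v) :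
    y ∈ side g u v :=
  (deleteEdges_adj.mpr ⟨h, by simpa using hne⟩).reachable.symm.trans hx

lemma exists_path_subset_side (hx : x ∈ side g u v) (hy : y ∈ side g u v) :
    ∃ p : g.Path x y, ∀ z ∈ p.1.support, z ∈ side g u v := by
  classical
  obtain ⟨W⟩ := hx.trans hy.symm
  refine ⟨⟨W.bypass.mapLe (deleteEdges_le _), W.bypass_isPath.mapLe _⟩, fun z hz => ?_⟩
  rw [Walk.support_mapLe_eq_support] at hz
  exact mem_side_of_mem_support hy (W.support_bypass_subset_support hz)

lemma disjoint_side (hac : g.IsAcyclic) (h : g.Adj u v) : Disjoint (side g u v) (side g v u) :=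
  Set.disjoint_left.mpr fun _ hu hv => isAcyclic_iff_forall_adj_isBridge.mp hac h
    (hu.symm.trans (by rwa [side, Sym2.eq_swap] at hv))

lemma mem_side_or_mem_side (hc : g.Connected) (w : V) :
    w ∈ side g u v ∨ w ∈ side g v u := by
  by_contra! hw
  obtain ⟨d, -, hd, hd'⟩ := (hc u w).some.exists_boundary_dart (side g u v ∪ side g v u)
    (Or.inl mem_side_self) (by simpa using hw)
  have hne : s(d.fst, d.snd) ≠ s(u, v) := fun he => hd' <| by
    rcases Sym2.eq_iff.mp he with ⟨-, h'⟩ | ⟨-, h'⟩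
    · exact h' ▸ Or.inr mem_side_self
    · exact h' ▸ Or.inl mem_side_self
  rcases hd with hd | hd
  · exact hd' (Or.inl (mem_side_of_adj d.adj hne hd))
  · exact hd' (Or.inr (mem_side_of_adj d.adj (by rwa [Sym2.eq_swap (a := v)]) hd))

lemma side_swap_eq_compl (ht : g.IsTree) (h : g.Adj u v) : side g v u = (side g u v)ᶜ :=
  Set.ext fun w => ⟨fun hw hw' => Set.disjoint_left.mp (disjoint_side ht.isAcyclic h) hw' hw,
    (mem_side_or_mem_side ht.connected w).resolve_left⟩

lemma mem_support_of_mem_side (hac : g.IsAcyclic) (h : g.Adj u v) (W : g.Walk x y)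
    (hx : x ∈ side g u v) (hy : y ∈ side g v u) : u ∈ W.support := by
  by_contra hu
  have hW : s(u, v) ∉ W.edges := fun he => hu (W.fst_mem_support_of_mem_edges he)
  have hy' : y ∈ side g u v := hx.symm.trans (W.toDeleteEdge _ hW).reachable |>.symm
  exact Set.disjoint_left.mp (disjoint_side hac h) hy' hy

lemma side_subset_side (hac : g.IsAcyclic) (huw : g.Adj u w) (hwv : w ≠ v) :
    side g w u ⊆ side g u v := by
  intro z hz
  obtain ⟨p, hp⟩ := exists_path_subset_side hz (mem_side_self (v := u))
  have hu : u ∉ p.1.support := fun hu =>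
    Set.disjoint_left.mp (disjoint_side hac huw.symm) (hp u hu) mem_side_self
  have hzw : (g.deleteEdges {s(u, v)}).Reachable z w :=
    (p.1.toDeleteEdge _ fun he => hu (p.1.fst_mem_support_of_mem_edges he)).reachable
  have hwu : (g.deleteEdges {s(u, v)}).Adj w u :=
    ⟨huw.symm, by simp [hwv, huw.ne.symm]⟩
  exact hzw.trans hwu.reachable

lemma eq_or_exists_mem_side (hz : z ∈ side g u v) :
    z = u ∨ ∃ w, g.Adj u w ∧ w ≠ v ∧ z ∈ side g w u := by
  classical
  obtain ⟨W⟩ := hz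
  have hP := W.reverse.bypass_isPath
  generalize W.reverse.bypass = P at hP
  cases P with
  | nil => exact Or.inl rfl
  | @cons _ w _ huw P =>
    obtain ⟨huw, hne⟩ := deleteEdges_adj.mp huw
    have hu : u ∉ P.support := ((Walk.cons_isPath_iff _ _).mp hP).2
    refine Or.inr ⟨w, huw, fun hwv => hne (by simp [hwv]), ?_⟩
    refine ⟨((P.mapLe (deleteEdges_le _)).toDeleteEdge s(w, u) fun he => hu ?_).reverse⟩
    simpa using (P.mapLe _).snd_mem_support_of_mem_edges he

lemma side_eq_singleton (h : g.neighborSet u = {v}) : side g u v = {u} :=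
  Set.eq_singleton_iff_unique_mem.mpr ⟨mem_side_self, fun _ hz =>
    (eq_or_exists_mem_side hz).resolve_right fun ⟨w, huw, hwv, _⟩ =>
      hwv (h ▸ huw : w ∈ ({v} : Set V))⟩

lemma exists_mem_side_neighborSet_eq_singleton [Finite V] (hac : g.IsAcyclic) (h : g.Adj u v) :
    ∃ w ∈ side g u v, ∃ x, g.neighborSet w = {x} := by
  induction hn : (side g u v).ncard using Nat.strong_induction_on generalizing u v with
  | _ n ih =>
  by_cases hu : g.neighborSet u = {v}
  · exact ⟨u, mem_side_self, v, hu⟩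
  obtain ⟨w, huw, hwv⟩ : ∃ w, g.Adj u w ∧ w ≠ v := by
    by_contra! hw
    exact hu (Set.eq_singleton_iff_unique_mem.mpr ⟨h, hw⟩)
  have hlt : side g w u ⊂ side g u v := ⟨side_subset_side hac huw hwv, fun hs =>
    Set.disjoint_left.mp (disjoint_side hac huw.symm) (hs mem_side_self) mem_side_self⟩
  obtain ⟨x, hx, hx'⟩ := ih _ (hn ▸ Set.ncard_lt_ncard hlt) huw.symm rfl
  exact ⟨x, hlt.subset hx, hx'⟩

end SimpleGraph

section Phylogeny

variable {L I : Type} {g : SimpleGraph (L ⊕ I)} {u v w₁ w₂ : L ⊕ I} {S S' : Set L}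

lemma IsPhylo.isTree (hg : IsPhylo g) : g.IsTree := ⟨hg.1, hg.2.1⟩

lemma splitOf_eq_preimage_side : splitOf g u v = Sum.inl ⁻¹' g.side u v := rfl

lemma splitOf_inl (hg : IsPhylo g) {l : L} (h : g.Adj (Sum.inl l) v) :
    splitOf g (Sum.inl l) v = {l} := by
  obtain ⟨w, hw⟩ := Set.ncard_eq_one.mp (hg.2.2.1 l)
  obtain rfl : v = w := (hw ▸ (h : v ∈ g.neighborSet _) : v ∈ ({w} : Set _))
  ext x
  simp [splitOf_eq_preimage_side, side_eq_singleton hw]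

lemma singleton_mem_splits (hg : IsPhylo g) (l : L) : {l} ∈ splits g := by
  obtain ⟨v, hv⟩ := Set.ncard_eq_one.mp (hg.2.2.1 l)
  have h : g.Adj (Sum.inl l) v := (hv ▸ Set.mem_singleton v : v ∈ g.neighborSet _)
  exact ⟨_, v, h, (splitOf_inl hg h).symm⟩

lemma splitOf_nonempty [Finite L] [Finite I] (hg : IsPhylo g) (h : g.Adj u v) :
    (splitOf g u v).Nonempty := by
  obtain ⟨w, hw, x, hx⟩ := exists_mem_side_neighborSet_eq_singleton hg.isTree.isAcyclic h
  cases w with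
  | inl l => exact ⟨l, hw⟩
  | inr i => simpa [pdeg, hx] using hg.2.2.2 i

lemma splitOf_swap_eq_compl (ht : g.IsTree) (h : g.Adj u v) :
    splitOf g v u = (splitOf g u v)ᶜ := by
  rw [splitOf_eq_preimage_side, side_swap_eq_compl ht h]
  rfl

lemma compl_mem_splits (ht : g.IsTree) (hS : S ∈ splits g) : Sᶜ ∈ splits g := by
  obtain ⟨u, v, h, rfl⟩ := hS
  exact ⟨v, u, h.symm, (splitOf_swap_eq_compl ht h).symm⟩

lemma IsPhylo.exists_other_neighbors (hg : IsPhylo g) {i : I} (h : g.Adj (Sum.inr i) v) :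
    ∃ w₁ w₂, g.Adj (Sum.inr i) w₁ ∧ g.Adj (Sum.inr i) w₂ ∧ w₁ ≠ w₂ ∧ w₁ ≠ v ∧ w₂ ≠ v ∧
      ∀ w, g.Adj (Sum.inr i) w → w = v ∨ w = w₁ ∨ w = w₂ := by
  have h2 : (g.neighborSet (Sum.inr i) \ {v}).ncard = 2 := by
    rw [Set.ncard_sdiff_singleton_of_mem (s := g.neighborSet _) h,
      show (g.neighborSet _).ncard = 3 from hg.2.2.2 i]
  obtain ⟨w₁, w₂, hne, heq⟩ := Set.ncard_eq_two.mp h2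
  have h₁ : w₁ ∈ g.neighborSet (Sum.inr i) \ {v} := heq ▸ Set.mem_insert _ _
  have h₂ : w₂ ∈ g.neighborSet (Sum.inr i) \ {v} := heq ▸ Set.mem_insert_of_mem _ rfl
  refine ⟨w₁, w₂, h₁.1, h₂.1, hne, h₁.2, h₂.2, fun w hw => or_iff_not_imp_left.mpr fun hwv => ?_⟩
  exact (heq ▸ ⟨hw, hwv⟩ : w ∈ ({w₁, w₂} : Set _))

lemma splitOf_eq_union (hac : g.IsAcyclic) {i : I} (h₁ : g.Adj (Sum.inr i) w₁)
    (h₂ : g.Adj (Sum.inr i) w₂) (h₁v : w₁ ≠ v) (h₂v : w₂ ≠ v)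
    (hnb : ∀ w, g.Adj (Sum.inr i) w → w = v ∨ w = w₁ ∨ w = w₂) :
    splitOf g (Sum.inr i) v = splitOf g w₁ (Sum.inr i) ∪ splitOf g w₂ (Sum.inr i) := by
  ext x
  refine ⟨fun hx => ?_, ?_⟩
  · rcases eq_or_exists_mem_side hx with h | ⟨w, hw, hwv, hxw⟩
    · cases h
    · rcases hnb w hw with rfl | rfl | rfl
      exacts [absurd rfl hwv, Or.inl hxw, Or.inr hxw]
  · rintro (hx | hx)
    exacts [side_subset_side hac h₁ h₁v hx, side_subset_side hac h₂ h₂v hx]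

lemma exists_splits_disjoint_union [Finite L] [Finite I] (hg : IsPhylo g) (hS : S ∈ splits g)
    (hnt : S.Nontrivial) : ∃ S₁ ∈ splits g, ∃ S₂ ∈ splits g,
      S₁.Nonempty ∧ S₂.Nonempty ∧ Disjoint S₁ S₂ ∧ S₁ ∪ S₂ = S := by
  obtain ⟨u, v, huv, rfl⟩ := hS
  cases u with
  | inl l => exact absurd (splitOf_inl hg huv ▸ hnt) Set.not_nontrivial_singleton
  | inr i =>
    obtain ⟨w₁, w₂, h₁, h₂, hne, h₁v, h₂v, hnb⟩ := hg.exists_other_neighbors huv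
    have hac := hg.isTree.isAcyclic
    refine ⟨_, ⟨w₁, _, h₁.symm, rfl⟩, _, ⟨w₂, _, h₂.symm, rfl⟩, splitOf_nonempty hg h₁.symm,
      splitOf_nonempty hg h₂.symm, ?_, (splitOf_eq_union hac h₁ h₂ h₁v h₂v hnb).symm⟩
    exact ((disjoint_side hac h₂.symm).mono_right (side_subset_side hac h₁ hne)).symm.preimage _

lemma quartetSplit_of_mem_splits (ht : g.IsTree) (hS : S ∈ splits g) {a b c d : L}
    (ha : a ∈ S) (hb : b ∈ S) (hc : c ∉ S) (hd : d ∉ S) : quartetSplit g a b c d := by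
  obtain ⟨u, v, h, rfl⟩ := hS
  rw [← Set.mem_compl_iff, ← splitOf_swap_eq_compl ht h] at hc hd
  obtain ⟨p, hp⟩ := exists_path_subset_side ha hb
  obtain ⟨q, hq⟩ := exists_path_subset_side hc hd
  exact ⟨p, q, fun z hzp hzq =>
    Set.disjoint_left.mp (disjoint_side ht.isAcyclic h) (hp z hzp) (hq z hzq)⟩

lemma not_quartetSplit_of_mem_splits (ht : g.IsTree) (hS : S ∈ splits g) {a b c d : L}
    (ha : a ∈ S) (hc : c ∈ S) (hb : b ∉ S) (hd : d ∉ S) : ¬ quartetSplit g a b c d := by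
  obtain ⟨u, v, h, rfl⟩ := hS
  rw [← Set.mem_compl_iff, ← splitOf_swap_eq_compl ht h] at hb hd
  rintro ⟨p, q, hpq⟩
  exact hpq u (mem_support_of_mem_side ht.isAcyclic h p.1 ha hb)
    (mem_support_of_mem_side ht.isAcyclic h q.1 hc hd)

/-- Two overlapping splits avoiding a common taxon `x` would display both `rp|qx` and `rq|px`,
where `p`, `q`, `r` witness the overlap. -/
lemma subset_or_subset_or_disjoint_of_mem_splits (ht : g.IsTree) (hS : S ∈ splits g)
    (hS' : S' ∈ splits g) {x : L} (hx : x ∉ S) (hx' : x ∉ S') :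
    S ⊆ S' ∨ S' ⊆ S ∨ Disjoint S S' := by
  by_contra! h
  obtain ⟨p, hpS, hpS'⟩ := Set.not_subset.mp h.1
  obtain ⟨q, hqS', hqS⟩ := Set.not_subset.mp h.2.1
  obtain ⟨r, hrS, hrS'⟩ := Set.not_disjoint_iff.mp h.2.2
  exact not_quartetSplit_of_mem_splits ht hS' hrS' hqS' hpS' hx'
    (quartetSplit_of_mem_splits ht hS hrS hpS hqS hx)

end Phylogeny

section Blocks

variable {L I : Type} {g g' : SimpleGraph (L ⊕ I)} {A B C D : Set L}

def Separates (g : SimpleGraph (L ⊕ I)) (X Y : Set L) : Prop :=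
  ∃ S ∈ splits g, X ⊆ S ∧ Y ⊆ Sᶜ

lemma Separates.disjoint {X Y : Set L} (h : Separates g X Y) : Disjoint X Y := by
  obtain ⟨S, -, hX, hY⟩ := h
  exact Set.disjoint_of_subset hX hY disjoint_compl_right

/-- The witness is the split `C₁ᶜ = A ∪ C₂`; were `C₁ \ B` empty, `A ∪ B = C₂ᶜ` would be a split. -/
lemma exists_separates_of_subset (ht : g.IsTree) {C₁ C₂ : Set L} (hC₁ : C₁ ∈ splits g)
    (hC₂ : C₂ ∈ splits g) (hC₂ne : C₂.Nonempty) (hC : Disjoint C₁ C₂) (hAC : C₁ ∪ C₂ = Aᶜ)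
    (hBC₁ : B ⊆ C₁) (hout : A ∪ B ∉ splits g) :
    ∃ C D : Set L, C.Nonempty ∧ D.Nonempty ∧ C ∪ D = (A ∪ B)ᶜ ∧ Separates g (A ∪ C) (B ∪ D) := by
  have hmem : ∀ x, (x ∈ C₁ ∨ x ∈ C₂ ↔ x ∉ A) ∧ ¬(x ∈ C₁ ∧ x ∈ C₂) ∧ (x ∈ B → x ∈ C₁) :=
    fun x => ⟨Set.ext_iff.mp hAC x, fun h => Set.disjoint_left.mp hC h.1 h.2, @hBC₁ x⟩
  refine ⟨C₂, C₁ \ B, hC₂ne, Set.sdiff_nonempty.mpr fun hC₁B => hout ?_,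
    Set.ext fun x => ?_, C₁ᶜ, compl_mem_splits ht hC₁, fun x hx => ?_, fun x hx => ?_⟩
  · convert compl_mem_splits ht hC₂ using 1
    ext x
    have := hmem x
    have := @hC₁B x
    simp only [Set.mem_union, Set.mem_compl_iff]
    tauto
  all_goals
    have := hmem x
    simp only [Set.mem_union, Set.mem_compl_iff, Set.mem_sdiff] at *
    tauto

/-- At the far end of the edge of `A`, the split `Aᶜ` divides as `C₁ ⊔ C₂`. By laminarity `B` lies
inside one of them, since otherwise both lie inside `B` and `(A ∪ B)ᶜ` would be empty. -/
lemma exists_separates_of_union_not_mem_splits [Finite L] [Finite I] (hg : IsPhylo g)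
    (hA : A ∈ splits g) (hB : B ∈ splits g) (hAne : A.Nonempty) (hBne : B.Nonempty)
    (hAB : Disjoint A B) (hR : (A ∪ B)ᶜ.Nonempty) (hout : A ∪ B ∉ splits g) :
    ∃ C D : Set L, C.Nonempty ∧ D.Nonempty ∧ C ∪ D = (A ∪ B)ᶜ ∧ Separates g (A ∪ C) (B ∪ D) := by
  obtain ⟨a, ha⟩ := hAne
  obtain ⟨b, hb⟩ := hBne
  obtain ⟨r, hr⟩ := hR
  have hBA : B ⊆ Aᶜ := hAB.subset_compl_left
  have hnt : Aᶜ.Nontrivial :=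
    ⟨b, hBA hb, r, fun h => hr (Or.inl h), fun h => hr (Or.inr (h ▸ hb))⟩
  obtain ⟨C₁, hC₁, C₂, hC₂, hC₁ne, hC₂ne, hC, hAC⟩ :=
    exists_splits_disjoint_union hg (compl_mem_splits hg.isTree hA) hnt
  have haB : a ∉ B := Set.disjoint_left.mp hAB ha
  have hBC : B ⊆ C₁ ∪ C₂ := hAC ▸ hBA
  have hB_C : B ⊆ C₁ ∨ B ⊆ C₂ := by
    by_contra! h
    have hC₁B : C₁ ⊆ B := by
      rcases subset_or_subset_or_disjoint_of_mem_splits hg.isTree hB hC₁ haB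
        (fun h => hAC.le (Or.inl h) ha) with h' | h' | h'
      exacts [absurd h' h.1, h', absurd (Disjoint.subset_right_of_subset_union hBC h') h.2]
    have hC₂B : C₂ ⊆ B := by
      rcases subset_or_subset_or_disjoint_of_mem_splits hg.isTree hB hC₂ haB
        (fun h => hAC.le (Or.inr h) ha) with h' | h' | h'
      exacts [absurd h' h.2, h', absurd (Disjoint.subset_left_of_subset_union hBC h') h.1]
    exact hr (Or.inr (Set.union_subset hC₁B hC₂B (hAC ▸ fun h => hr (Or.inl h))))
  rcases hB_C with h | h
  · exact exists_separates_of_subset hg.isTree hC₁ hC₂ hC₂ne hC hAC h hout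
  · exact exists_separates_of_subset hg.isTree hC₂ hC₁ hC₁ne hC.symm
      (Set.union_comm C₁ C₂ ▸ hAC) h hout

structure ConflictingBlocks (g g' : SimpleGraph (L ⊕ I)) (A B C D : Set L) : Prop where
  nonempty_A : A.Nonempty
  nonempty_B : B.Nonempty
  nonempty_C : C.Nonempty
  nonempty_D : D.Nonempty
  union_eq_univ : (A ∪ B) ∪ (C ∪ D) = Set.univ
  separates : Separates g (A ∪ B) (C ∪ D)
  separates' : Separates g' (A ∪ C) (B ∪ D)

lemma ConflictingBlocks.swap (h : ConflictingBlocks g g' A B C D) :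
    ConflictingBlocks g' g A C B D :=
  ⟨h.nonempty_A, h.nonempty_C, h.nonempty_B, h.nonempty_D,
    Set.union_union_union_comm A B C D ▸ h.union_eq_univ, h.separates', h.separates⟩

/-- Splitting `S₀ = A ∪ B` at its internal endpoint, minimality puts `A` and `B` into `g'` and
makes `(A ∪ B)ᶜ` nonempty; as `S₀ ∉ splits g'`, the tree `g'` must then cut `(A ∪ B)ᶜ`. -/
lemma exists_conflictingBlocks [Finite L] [Finite I] (hg : IsPhylo g) (hg' : IsPhylo g')
    {S₀ : Set L} (hS₀ : S₀ ∈ splits g) (hS₀' : S₀ ∉ splits g')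
    (hmin : ∀ S ∈ splits g ∆ splits g', S₀.ncard ≤ S.ncard) :
    ∃ A B C D, ConflictingBlocks g g' A B C D := by
  have hne : S₀.Nonempty := by
    obtain ⟨u, v, h, rfl⟩ := hS₀
    exact splitOf_nonempty hg h
  have hnt : S₀.Nontrivial := hne.exists_eq_singleton_or_nontrivial.resolve_left
    fun ⟨x, hx⟩ => hS₀' (hx ▸ singleton_mem_splits hg' x)
  obtain ⟨A, hA, B, hB, hAne, hBne, hAB, rfl⟩ := exists_splits_disjoint_union hg hS₀ hnt
  have hmem : ∀ X ∈ splits g, X ⊂ A ∪ B → X ∈ splits g' := fun X hX hlt => by_contra fun hX' =>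
    (hmin X (Set.mem_symmDiff.mpr (Or.inl ⟨hX, hX'⟩))).not_gt (Set.ncard_lt_ncard hlt)
  obtain ⟨a, ha⟩ := hAne
  obtain ⟨b, hb⟩ := hBne
  have hA' : A ∈ splits g' := hmem A hA (Set.ssubset_union_left_iff.mpr fun h =>
    Set.disjoint_left.mp hAB (h hb) hb)
  have hB' : B ∈ splits g' := hmem B hB (Set.ssubset_union_right_iff.mpr fun h =>
    Set.disjoint_left.mp hAB ha (h ha))
  have hcompl : (A ∪ B)ᶜ ∈ splits g ∆ splits g' := Set.mem_symmDiff.mpr <| Or.inl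
    ⟨compl_mem_splits hg.isTree hS₀,
      fun h => hS₀' (compl_compl (A ∪ B) ▸ compl_mem_splits hg'.isTree h)⟩
  have hR : (A ∪ B)ᶜ.Nonempty := Set.nonempty_of_ncard_ne_zero
    (((Set.ncard_pos (Set.toFinite _)).mpr hne).trans_le (hmin _ hcompl)).ne'
  obtain ⟨C, D, hC, hD, hCD, hsep⟩ :=
    exists_separates_of_union_not_mem_splits hg' hA' hB' ⟨a, ha⟩ ⟨b, hb⟩ hAB hR hS₀'
  exact ⟨A, B, C, D, ⟨a, ha⟩, ⟨b, hb⟩, hC, hD, by rw [hCD, Set.union_compl_self],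
    ⟨A ∪ B, hS₀, subset_rfl, hCD.le⟩, hsep⟩

end Blocks

lemma ncard_mul_le_ncard_quartets {α : Type*} [Fintype α] [DecidableEq α] {A B C D : Set α}
    (hAB : Disjoint A B) (hCD : Disjoint C D) (hABCD : Disjoint (A ∪ B) (C ∪ D))
    (P : α → α → α → α → Prop) (hP : ∀ a ∈ A, ∀ b ∈ B, ∀ c ∈ C, ∀ d ∈ D, P a b c d) :
    A.ncard * B.ncard * C.ncard * D.ncard ≤
      {s : Finset α | s.card = 4 ∧ ∃ a b c d, s = {a, b, c, d} ∧ P a b c d}.ncard := by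
  rw [Set.disjoint_left] at hAB hCD hABCD
  simp only [Set.mem_union] at hABCD
  have hmaps : ∀ p ∈ A ×ˢ B ×ˢ C ×ˢ D, ({p.1, p.2.1, p.2.2.1, p.2.2.2} : Finset α) ∈
      {s : Finset α | s.card = 4 ∧ ∃ a b c d, s = {a, b, c, d} ∧ P a b c d} := by
    rintro ⟨a, b, c, d⟩ ⟨ha, hb, hc, hd⟩
    refine ⟨?_, a, b, c, d, rfl, hP a ha b hb c hc d hd⟩
    rw [Finset.card_insert_of_notMem, Finset.card_insert_of_notMem, Finset.card_pair] <;> grind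
  have hinj : Set.InjOn (fun p : α × α × α × α => ({p.1, p.2.1, p.2.2.1, p.2.2.2} : Finset α))
      (A ×ˢ B ×ˢ C ×ˢ D) := by
    rintro ⟨a, b, c, d⟩ ⟨ha, hb, hc, hd⟩ ⟨a', b', c', d'⟩ ⟨ha', hb', hc', hd'⟩ h
    have hq := Finset.ext_iff.mp h
    have := hq a; have := hq b; have := hq c; have := hq d
    simp only [Finset.mem_insert, Finset.mem_singleton, true_or, or_true, true_iff] at *
    grind
  calc A.ncard * B.ncard * C.ncard * D.ncard = (A ×ˢ B ×ˢ C ×ˢ D).ncard := by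
        simp only [Set.ncard_prod, mul_assoc]
    _ ≤ _ := Set.ncard_le_ncard_of_injOn _ hmaps hinj

lemma add_add_add_sub_three_le_mul {a b c d : ℕ} (ha : 0 < a) (hb : 0 < b) (hc : 0 < c)
    (hd : 0 < d) : a + b + c + d - 3 ≤ a * b * c * d := by
  have hab : a + b ≤ a * b + 1 := by nlinarith
  have hcd : c + d ≤ c * d + 1 := by nlinarith
  have habcd : a * b + c * d ≤ a * b * (c * d) + 1 := by
    nlinarith [Nat.mul_pos ha hb, Nat.mul_pos hc hd]
  rw [← mul_assoc] at habcd
  omega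

lemma ConflictingBlocks.card_sub_three_le_dQ {L I : Type} [Fintype L] [DecidableEq L]
    {g g' : SimpleGraph (L ⊕ I)} {A B C D : Set L} (h : ConflictingBlocks g g' A B C D)
    (hg : g.IsTree) (hg' : g'.IsTree) : Fintype.card L - 3 ≤ dQ g g' := by
  obtain ⟨S, hS, hABS, hCDS⟩ := h.separates
  obtain ⟨S', hS', hACS', hBDS'⟩ := h.separates'
  have hAB : Disjoint A B := h.separates'.disjoint.mono Set.subset_union_left Set.subset_union_left
  have hCD : Disjoint C D :=
    h.separates'.disjoint.mono Set.subset_union_right Set.subset_union_right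
  have hcard : A.ncard + B.ncard + C.ncard + D.ncard = Fintype.card L := by
    rw [← Set.ncard_union_eq hAB, add_assoc, ← Set.ncard_union_eq hCD,
      ← Set.ncard_union_eq h.separates.disjoint, h.union_eq_univ, Set.ncard_univ,
      Nat.card_eq_fintype_card]
  calc Fintype.card L - 3 ≤ A.ncard * B.ncard * C.ncard * D.ncard :=
        hcard ▸ add_add_add_sub_three_le_mul h.nonempty_A.ncard_pos h.nonempty_B.ncard_pos
          h.nonempty_C.ncard_pos h.nonempty_D.ncard_pos
    _ ≤ dQ g g' := ncard_mul_le_ncard_quartets hAB hCD h.separates.disjoint _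
        fun a ha b hb c hc d hd =>
          ⟨quartetSplit_of_mem_splits hg hS (hABS (.inl ha)) (hABS (.inr hb))
            (hCDS (.inl hc)) (hCDS (.inr hd)),
          not_quartetSplit_of_mem_splits hg' hS' (hACS' (.inl ha)) (hACS' (.inr hc))
            (hBDS' (.inl hb)) (hBDS' (.inr hd))⟩

theorem quartet_distance_lower_bound_general {L I : Type} [Fintype L] [DecidableEq L]
    [Fintype I] (g g' : SimpleGraph (L ⊕ I)) (hg : IsPhylo g) (hg' : IsPhylo g')
    (hdistinct : splits g ≠ splits g') :
    Fintype.card L - 3 ≤ dQ g g' := by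
  obtain ⟨S₀, hS₀, hmin⟩ := (splits g ∆ splits g').exists_min_image Set.ncard (Set.toFinite _)
    (Set.symmDiff_nonempty.mpr hdistinct)
  rcases Set.mem_symmDiff.mp hS₀ with ⟨h, h'⟩ | ⟨h, h'⟩
  · obtain ⟨A, B, C, D, hb⟩ := exists_conflictingBlocks hg hg' h h' hmin
    exact hb.card_sub_three_le_dQ hg.isTree hg'.isTree
  · obtain ⟨A, B, C, D, hb⟩ :=
      exists_conflictingBlocks hg' hg h h' (symmDiff_comm (splits g) (splits g') ▸ hmin)
    exact hb.swap.card_sub_three_le_dQ hg.isTree hg'.isTree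

/-- Distinct unrooted binary trees on the same set of
`n ≥ 4` leaves have quartet distance at least `n - 3`. -/
theorem quartet_distance_lower_bound {L I : Type} [Fintype L] [DecidableEq L]
    [Fintype I] (g g' : SimpleGraph (L ⊕ I)) (hg : IsPhylo g) (hg' : IsPhylo g')
    (hn : 4 ≤ Fintype.card L) (hdistinct : splits g ≠ splits g') :
    Fintype.card L - 3 ≤ dQ g g' :=
  quartet_distance_lower_bound_general g g' hg hg' hdistinct
end
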